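/- Fix a finite MDP, α > 0, and κ ∈ [0,1). Let T' : ℝ^{S×𝒜} → ℝ^{S×𝒜} be a sandwiched operator, let Ψ_0 : S×𝒜 → ℝ, and consider the induced sequence Ψ_{k+1} = T' Ψ_k with V_k = L^α Ψ_k. Then for all k ∈ ℕ and all s ∈ S: |V_k(s)| ≤ (R_max + 3·‖V_0‖_∞ + α·log|𝒜|)/(1−γ), where ‖V_0‖_∞ = max_s |V_0(s)| and |𝒜| is the cardinality of 𝒜. -/

import Mathlib

open Finset Filter

noncomputable section

variable {S A : Type*}

/-- A Markovian transition kernel: nonnegative and summing to one over next states. -/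
def isKernel [Fintype S] (P : S → A → S → ℝ) : Prop :=
  (∀ s a s', 0 ≤ P s a s') ∧ ∀ s a, ∑ s', P s a s' = 1

/-- A (Markovian, stochastic) policy: a probability distribution over actions per state. -/
def isPolicy [Fintype A] (π : S → A → ℝ) : Prop :=
  (∀ s a, 0 ≤ π s a) ∧ ∀ s, ∑ a, π s a = 1

/-- A bounding function with constant `c > 0`: nondecreasing, `h 0 = 0`,
`0 ≤ h x ≤ x` for `x ≥ 0`, `x ≤ h x ≤ 0` for `x ≤ 0`, and `|h x| ≤ c`. -/
def isBounding (h : ℝ → ℝ) (c : ℝ) : Prop :=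
  Monotone h ∧ h 0 = 0 ∧ (∀ x, 0 ≤ x → 0 ≤ h x ∧ h x ≤ x) ∧
    (∀ x, x ≤ 0 → x ≤ h x ∧ h x ≤ 0) ∧ (∀ x, |h x| ≤ c) ∧ 0 < c

/-- The soft (log-sum-exp) state value `(L^α Ψ)(s) = α log ∑_a exp (Ψ(s,a)/α)`. -/
def lse [Fintype A] (α : ℝ) (Ψ : S → A → ℝ) (s : S) : ℝ :=
  α * Real.log (∑ a, Real.exp (Ψ s a / α))

/-- The softmax (Boltzmann) policy `G^α(Ψ)`. -/
def gibbs [Fintype A] (α : ℝ) (Ψ : S → A → ℝ) (s : S) (a : A) : ℝ :=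
  Real.exp (Ψ s a / α) / ∑ b, Real.exp (Ψ s b / α)

/-- The soft advantage `A_Ψ(s,a) = Ψ(s,a) − (L^α Ψ)(s)`. -/
def adv [Fintype A] (α : ℝ) (Ψ : S → A → ℝ) (s : S) (a : A) : ℝ :=
  Ψ s a - lse α Ψ s

/-- `(P V)(s,a) = ∑_{s'} P(s'|s,a) V(s')`. -/
def PV [Fintype S] (P : S → A → S → ℝ) (V : S → ℝ) (s : S) (a : A) : ℝ :=
  ∑ s', P s a s' * V s'

/-- `(P^π W)(s) = ∑_a π(a|s) ∑_{s'} P(s'|s,a) W(s')`. -/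
def Ppi [Fintype S] [Fintype A] (P : S → A → S → ℝ) (π : S → A → ℝ)
    (W : S → ℝ) (s : S) : ℝ :=
  ∑ a, π s a * ∑ s', P s a s' * W s'

/-- Entropy of a policy: `H(π)(s) = −∑_a π(a|s) log π(a|s)`. -/
def ent [Fintype A] (π : S → A → ℝ) (s : S) : ℝ :=
  -∑ a, π s a * Real.log (π s a)

/-- KL divergence between two policies at a state. -/
def klDiv [Fintype A] (π₁ π₂ : S → A → ℝ) (s : S) : ℝ :=
  ∑ a, π₁ s a * Real.log (π₁ s a / π₂ s a)

/-- The soft Bellman optimality operator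
`(T^α Ψ)(s,a) = R(s,a) + γ ∑_{s'} P(s'|s,a) (L^α Ψ)(s')`. -/
def softBellman [Fintype S] [Fintype A] (P : S → A → S → ℝ) (R : S → A → ℝ)
    (γ α : ℝ) (Ψ : S → A → ℝ) (s : S) (a : A) : ℝ :=
  R s a + γ * ∑ s', P s a s' * lse α Ψ s'

/-- A sandwiched operator:
`(T^α Ψ)(s,a) − κ((L^α Ψ)(s) − Ψ(s,a)) ≤ (T' Ψ)(s,a) ≤ (T^α Ψ)(s,a)` for all `Ψ, s, a`. -/
def Sandwiched [Fintype S] [Fintype A] (P : S → A → S → ℝ) (R : S → A → ℝ)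
    (γ α κ : ℝ) (T' : (S → A → ℝ) → S → A → ℝ) : Prop :=
  ∀ Ψ s a, softBellman P R γ α Ψ s a - κ * (lse α Ψ s - Ψ s a) ≤ T' Ψ s a ∧
    T' Ψ s a ≤ softBellman P R γ α Ψ s a

/-- The bounded gap-increasing operator `T^{fg}_π`. -/
def balOp [Fintype S] [Fintype A] (P : S → A → S → ℝ) (R : S → A → ℝ)
    (γ α κ : ℝ) (f g : ℝ → ℝ) (π Ψ : S → A → ℝ) (s : S) (a : A) : ℝ :=
  R s a + κ * f (adv α Ψ s a) +
    γ * ∑ s', P s a s' * ∑ a', π s' a' * (Ψ s' a' - g (adv α Ψ s' a'))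

/-- The BAL sequence `Ψ_{k+1} = T^{fg}_{π_{k+1}} Ψ_k` with `π_{k+1} = G^α(Ψ_k)`. -/
def balSeq [Fintype S] [Fintype A] (P : S → A → S → ℝ) (R : S → A → ℝ)
    (γ α κ : ℝ) (f g : ℝ → ℝ) (Ψ0 : S → A → ℝ) : ℕ → S → A → ℝ
  | 0 => Ψ0
  | k + 1 => balOp P R γ α κ f g (gibbs α (balSeq P R γ α κ f g Ψ0 k))
      (balSeq P R γ α κ f g Ψ0 k)

/-- The BAL policy sequence: `π_0` is uniform and `π_{k+1} = G^α(Ψ_k)`. -/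
def balPol [Fintype S] [Fintype A] (P : S → A → S → ℝ) (R : S → A → ℝ)
    (γ α κ : ℝ) (f g : ℝ → ℝ) (Ψ0 : S → A → ℝ) : ℕ → S → A → ℝ
  | 0 => fun _ _ => 1 / (Fintype.card A : ℝ)
  | k + 1 => gibbs α (balSeq P R γ α κ f g Ψ0 k)

/-- Hard (non-regularized) state value `V(s) = max_a Ψ(s,a)`. -/
def hardV [Fintype A] [Nonempty A] (Ψ : S → A → ℝ) (s : S) : ℝ :=
  Finset.univ.sup' Finset.univ_nonempty (Ψ s)

/-- Hard advantage `A(s,a) = Ψ(s,a) − V(s)`. -/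
def hardAdv [Fintype A] [Nonempty A] (Ψ : S → A → ℝ) (s : S) (a : A) : ℝ :=
  Ψ s a - hardV Ψ s

/-- Hard Bellman optimality operator `(T Ψ)(s,a) = R(s,a) + γ ∑_{s'} P(s'|s,a) max_b Ψ(s',b)`. -/
def hardBellman [Fintype S] [Fintype A] [Nonempty A] (P : S → A → S → ℝ)
    (R : S → A → ℝ) (γ : ℝ) (Ψ : S → A → ℝ) (s : S) (a : A) : ℝ :=
  R s a + γ * ∑ s', P s a s' * hardV Ψ s'

/-- Hard bounded gap-increasing operator. -/
def hardBalOp [Fintype S] [Fintype A] [Nonempty A] (P : S → A → S → ℝ)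
    (R : S → A → ℝ) (γ κ : ℝ) (f g : ℝ → ℝ) (π Ψ : S → A → ℝ) (s : S) (a : A) : ℝ :=
  R s a + κ * f (hardAdv Ψ s a) +
    γ * ∑ s', P s a s' * ∑ a', π s' a' * (Ψ s' a' - g (hardAdv Ψ s' a'))

/-!
Write `M = ‖V₀‖_∞` and `N = α log |𝒜|`. Log-sum-exp exceeds the maximum by at most `N`, so at
a greedy action the gap `L^α Ψ(s) − Ψ(s,a)` lies in `[0, N]`; as `κ ≤ 1`, the sandwich gives
`|L^α (T' Ψ)(s)| ≤ R_max + γ ‖L^α Ψ‖_∞ + N`. Hence `B = (R_max + 3M + N)/(1 − γ) ≥ M` is an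
invariant bound, since `R_max + γ B + N ≤ B`.
-/

section LogSumExp

variable [Fintype A] {α : ℝ}

lemma le_lse (hα : 0 < α) (Ψ : S → A → ℝ) (s : S) (a : A) : Ψ s a ≤ lse α Ψ s := by
  have hexp : Real.exp (Ψ s a / α) ≤ ∑ b, Real.exp (Ψ s b / α) :=
    Finset.single_le_sum (fun b _ => (Real.exp_pos (Ψ s b / α)).le) (Finset.mem_univ a)
  have hlog : Ψ s a / α ≤ Real.log (∑ b, Real.exp (Ψ s b / α)) := by
    simpa only [Real.log_exp] using Real.log_le_log (Real.exp_pos _) hexp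
  calc Ψ s a = α * (Ψ s a / α) := by field_simp
    _ ≤ lse α Ψ s := mul_le_mul_of_nonneg_left hlog hα.le

lemma lse_le_sup'_add [Nonempty A] (hα : 0 < α) (Ψ : S → A → ℝ) (s : S) :
    lse α Ψ s ≤ univ.sup' univ_nonempty (Ψ s) + α * Real.log (Fintype.card A) := by
  set m := univ.sup' univ_nonempty (Ψ s)
  have hcard : (0 : ℝ) < Fintype.card A := by exact_mod_cast Fintype.card_pos
  have hsum : ∑ a, Real.exp (Ψ s a / α) ≤ Fintype.card A * Real.exp (m / α) := by
    calc ∑ a, Real.exp (Ψ s a / α) ≤ ∑ _a : A, Real.exp (m / α) :=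
          sum_le_sum fun a _ => Real.exp_le_exp.2 <|
            div_le_div_of_nonneg_right (le_sup' (Ψ s) (mem_univ a)) hα.le
      _ = Fintype.card A * Real.exp (m / α) := by simp
  have hlog : Real.log (∑ a, Real.exp (Ψ s a / α)) ≤ Real.log (Fintype.card A) + m / α := by
    have := Real.log_le_log (sum_pos (fun a _ => Real.exp_pos _) univ_nonempty) hsum
    rwa [Real.log_mul hcard.ne' (Real.exp_pos _).ne', Real.log_exp] at this
  calc lse α Ψ s ≤ α * (Real.log (Fintype.card A) + m / α) :=
        mul_le_mul_of_nonneg_left hlog hα.le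
    _ = m + α * Real.log (Fintype.card A) := by field_simp; ring

lemma exists_lse_sub_le [Nonempty A] (hα : 0 < α) (Ψ : S → A → ℝ) (s : S) :
    ∃ a, lse α Ψ s - Ψ s a ≤ α * Real.log (Fintype.card A) := by
  obtain ⟨a, -, ha⟩ := exists_mem_eq_sup' univ_nonempty (Ψ s)
  exact ⟨a, by linarith [lse_le_sup'_add hα Ψ s]⟩

end LogSumExp

lemma abs_sum_kernel_mul_le [Fintype S] {P : S → A → S → ℝ} (hP : isKernel P) {V : S → ℝ}
    {B : ℝ} (hV : ∀ s', |V s'| ≤ B) (s : S) (a : A) : |∑ s', P s a s' * V s'| ≤ B := by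
  calc |∑ s', P s a s' * V s'| ≤ ∑ s', P s a s' * |V s'| := by
        refine (abs_sum_le_sum_abs _ _).trans_eq (sum_congr rfl fun s' _ => ?_)
        rw [abs_mul, abs_of_nonneg (hP.1 s a s')]
    _ ≤ ∑ s', P s a s' * B :=
        sum_le_sum fun s' _ => mul_le_mul_of_nonneg_left (hV s') (hP.1 s a s')
    _ = B := by rw [← sum_mul, hP.2 s a, one_mul]

lemma abs_softBellman_le [Fintype S] [Fintype A] {P : S → A → S → ℝ} {R : S → A → ℝ}
    {Rmax γ α B : ℝ} (hP : isKernel P) (hR : ∀ s a, |R s a| ≤ Rmax) (hγ : 0 ≤ γ)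
    {Ψ : S → A → ℝ} (hV : ∀ s, |lse α Ψ s| ≤ B) (s : S) (a : A) :
    |softBellman P R γ α Ψ s a| ≤ Rmax + γ * B := by
  calc |softBellman P R γ α Ψ s a|
      ≤ |R s a| + |γ * ∑ s', P s a s' * lse α Ψ s'| := abs_add_le _ _
    _ = |R s a| + γ * |∑ s', P s a s' * lse α Ψ s'| := by rw [abs_mul, abs_of_nonneg hγ]
    _ ≤ Rmax + γ * B :=
        add_le_add (hR s a) (mul_le_mul_of_nonneg_left (abs_sum_kernel_mul_le hP hV s a) hγ)

lemma Sandwiched.abs_lse_le [Fintype S] [Fintype A] [Nonempty A] {P : S → A → S → ℝ}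
    {R : S → A → ℝ} {γ α κ C : ℝ} {T' : (S → A → ℝ) → S → A → ℝ}
    (hT : Sandwiched P R γ α κ T') (hα : 0 < α) (hκ : κ ≤ 1) {Ψ : S → A → ℝ}
    (hC : ∀ s a, |softBellman P R γ α Ψ s a| ≤ C) (s : S) :
    |lse α (T' Ψ) s| ≤ C + α * Real.log (Fintype.card A) := by
  rw [abs_le]
  constructor
  · obtain ⟨a, ha⟩ := exists_lse_sub_le hα Ψ s
    have hgap : 0 ≤ lse α Ψ s - Ψ s a := sub_nonneg.2 (le_lse hα Ψ s a)
    have hκgap : κ * (lse α Ψ s - Ψ s a) ≤ lse α Ψ s - Ψ s a := by nlinarith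
    linarith [(hT Ψ s a).1, (abs_le.1 (hC s a)).1, le_lse hα (T' Ψ) s a]
  · have hsup : univ.sup' univ_nonempty (T' Ψ s) ≤ C :=
      sup'_le _ _ fun a _ => (hT Ψ s a).2.trans (le_abs_self _ |>.trans (hC s a))
    linarith [lse_le_sup'_add hα (T' Ψ) s]

theorem sandwiched_value_bounded_general [Fintype S] [Fintype A] [Nonempty S] [Nonempty A]
    (P : S → A → S → ℝ) (R : S → A → ℝ) (Rmax γ α κ : ℝ)
    (hP : isKernel P) (hR : ∀ s a, |R s a| ≤ Rmax)
    (hγ0 : 0 < γ) (hγ1 : γ < 1) (hα : 0 < α) (hκ1 : κ < 1)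
    (T' : (S → A → ℝ) → S → A → ℝ) (hT : Sandwiched P R γ α κ T')
    (Ψ0 : S → A → ℝ) :
    ∀ (k : ℕ) (s : S),
      |lse α (T'^[k] Ψ0) s| ≤
        (Rmax + 3 * (Finset.univ.sup' Finset.univ_nonempty fun s' => |lse α Ψ0 s'|) +
            α * Real.log (Fintype.card A : ℝ)) / (1 - γ) := by
  set M := univ.sup' univ_nonempty fun s' => |lse α Ψ0 s'|
  set N := α * Real.log (Fintype.card A : ℝ)
  set B := (Rmax + 3 * M + N) / (1 - γ)
  have hRmax : 0 ≤ Rmax := (abs_nonneg _).trans (hR (Classical.arbitrary _) (Classical.arbitrary _))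
  have hV0 (s : S) : |lse α Ψ0 s| ≤ M := le_sup' (fun s' => |lse α Ψ0 s'|) (mem_univ s)
  have hM : 0 ≤ M := (abs_nonneg _).trans (hV0 (Classical.arbitrary S))
  have hN : 0 ≤ N := mul_nonneg hα.le (Real.log_nonneg (by exact_mod_cast Fintype.card_pos))
  have hB : B * (1 - γ) = Rmax + 3 * M + N := div_mul_cancel₀ _ (sub_pos.2 hγ1).ne'
  have hMB : M ≤ B := by nlinarith
  have hstep : Rmax + γ * B + N ≤ B := by linarith
  intro k
  induction k with
  | zero => exact fun s => (hV0 s).trans hMB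
  | succ k ih =>
    intro s
    rw [Function.iterate_succ_apply']
    exact (hT.abs_lse_le hα hκ1.le (abs_softBellman_le hP hR hγ0.le ih) s).trans hstep

/-- uniform bound on the soft values of the sequence induced by a
sandwiched operator:
`|V_k(s)| ≤ (R_max + 3‖V_0‖_∞ + α log|𝒜|)/(1−γ)`. -/
theorem sandwiched_value_bounded [Fintype S] [Fintype A] [Nonempty S] [Nonempty A]
    (P : S → A → S → ℝ) (R : S → A → ℝ) (Rmax γ α κ : ℝ)
    (hP : isKernel P) (hR : ∀ s a, |R s a| ≤ Rmax) (hRmax : 0 ≤ Rmax)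
    (hγ0 : 0 < γ) (hγ1 : γ < 1) (hα : 0 < α) (hκ0 : 0 ≤ κ) (hκ1 : κ < 1)
    (T' : (S → A → ℝ) → S → A → ℝ) (hT : Sandwiched P R γ α κ T')
    (Ψ0 : S → A → ℝ) :
    ∀ (k : ℕ) (s : S),
      |lse α (T'^[k] Ψ0) s| ≤
        (Rmax + 3 * (Finset.univ.sup' Finset.univ_nonempty fun s' => |lse α Ψ0 s'|) +
            α * Real.log (Fintype.card A : ℝ)) / (1 - γ) :=
  sandwiched_value_bounded_general P R Rmax γ α κ hP hR hγ0 hγ1 hα hκ1 T' hT Ψ0
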